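/- arXiv:1912.09290 — 6 statements merged into one kernel-verified Lean document; each statement's English description precedes it below -/
import Mathlib

section
/- If there are infinitely many integers x ≥ 0 such that T_x contains seven primes, then for each k ∈ {2, 4, 6} there are infinitely many pairs of primes p, p' with p' − p = k. -/
/-!
Seven primes among the eight elements of `T x` leave at most one composite. For each
`k ∈ {2, 4, 6}` the set `S` contains two disjoint pairs `{i, i + k}`:
`(11, 13), (17, 19)`; `(7, 11), (13, 17)`; `(1, 7), (11, 17)`. A single composite spoils at
most one of them, so every such block `T x` yields a prime pair `(p, p + k)` with
`30 x < p < 30 x + 30`, and infinitely many blocks give infinitely many pairs.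
-/

/-- The set `S` of positive integers less than 30 and coprime to 30. -/
def S : Finset ℕ := {1, 7, 11, 13, 17, 19, 23, 29}

/-- `T x` is the set `{30x + i : i ∈ S}`. -/
def T (x : ℕ) : Finset ℕ := S.image (fun i => 30 * x + i)

theorem Finset.or_of_card_filter_not_le_one {α : Type*} {p : α → Prop} [DecidablePred p]
    {s : Finset α} (hs : (s.filter fun a => ¬ p a).card ≤ 1) {a b : α} (ha : a ∈ s)
    (hb : b ∈ s) (hab : a ≠ b) : p a ∨ p b := by
  by_contra! hnot
  exact hab (Finset.card_le_one.mp hs a (Finset.mem_filter.mpr ⟨ha, hnot.1⟩)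
    b (Finset.mem_filter.mpr ⟨hb, hnot.2⟩))

theorem card_T (x : ℕ) : (T x).card = 8 := by
  rw [T, Finset.card_image_of_injective _ (add_right_injective _)]
  rfl

theorem card_filter_not_prime_T_le_one {x : ℕ} (hx : 7 ≤ ((T x).filter Nat.Prime).card) :
    ((T x).filter fun n => ¬ n.Prime).card ≤ 1 := by
  have := (T x).card_filter_add_card_filter_not Nat.Prime
  rw [card_T] at this
  omega

theorem prime_or_prime_of_seven_primes_T {x i j : ℕ}
    (hx : 7 ≤ ((T x).filter Nat.Prime).card) (hi : i ∈ S) (hj : j ∈ S) (hij : i ≠ j) :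
    (30 * x + i).Prime ∨ (30 * x + j).Prime :=
  Finset.or_of_card_filter_not_le_one (card_filter_not_prime_T_le_one hx)
    (Finset.mem_image_of_mem _ hi) (Finset.mem_image_of_mem _ hj) (by omega)

theorem exists_prime_pair_of_disjoint_pairs_S {x a b k : ℕ}
    (hx : 7 ≤ ((T x).filter Nat.Prime).card) (ha : a ∈ S) (hak : a + k ∈ S) (hb : b ∈ S)
    (hbk : b + k ∈ S) (hab : a + k < b) :
    ∃ i ∈ S, (30 * x + i).Prime ∧ (30 * x + i + k).Prime := by
  by_cases hpair : (30 * x + a).Prime ∧ (30 * x + a + k).Prime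
  · exact ⟨a, ha, hpair⟩
  have hb_pair : ∀ c ∈ S, c < b → ¬ (30 * x + c).Prime →
      (30 * x + b).Prime ∧ (30 * x + b + k).Prime := fun c hc hcb hnc =>
    ⟨(prime_or_prime_of_seven_primes_T hx hc hb (by omega)).resolve_left hnc,
      add_assoc (30 * x) b k ▸
        (prime_or_prime_of_seven_primes_T hx hc hbk (by omega)).resolve_left hnc⟩
  rcases not_and_or.mp hpair with hna | hnak
  · exact ⟨b, hb, hb_pair a ha (by omega) hna⟩
  · exact ⟨b, hb, hb_pair (a + k) hak hab (by rwa [← add_assoc])⟩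

theorem exists_prime_pair_of_seven_primes_T {x k : ℕ} (hx : 7 ≤ ((T x).filter Nat.Prime).card)
    (hk : k ∈ ({2, 4, 6} : Finset ℕ)) :
    ∃ i ∈ S, (30 * x + i).Prime ∧ (30 * x + i + k).Prime := by
  simp only [Finset.mem_insert, Finset.mem_singleton] at hk
  rcases hk with rfl | rfl | rfl
  · exact exists_prime_pair_of_disjoint_pairs_S (a := 11) (b := 17) hx
      (by decide) (by decide) (by decide) (by decide) (by norm_num)
  · exact exists_prime_pair_of_disjoint_pairs_S (a := 7) (b := 13) hx
      (by decide) (by decide) (by decide) (by decide) (by norm_num)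
  · exact exists_prime_pair_of_disjoint_pairs_S (a := 1) (b := 11) hx
      (by decide) (by decide) (by decide) (by decide) (by norm_num)

theorem seven_prime_sets_imply_polignac
    (h : {x : ℕ | 7 ≤ ((T x).filter Nat.Prime).card}.Infinite) :
    ∀ k ∈ ({2, 4, 6} : Finset ℕ),
      {q : ℕ × ℕ | q.1.Prime ∧ q.2.Prime ∧ q.2 = q.1 + k}.Infinite := by
  intro k hk
  refine Set.Infinite.of_image Prod.fst (Set.infinite_of_forall_exists_gt fun n => ?_)
  obtain ⟨x, hx, hnx⟩ := h.exists_gt n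
  obtain ⟨i, -, hp, hpk⟩ := exists_prime_pair_of_seven_primes_T hx hk
  exact ⟨30 * x + i, ⟨(30 * x + i, 30 * x + i + k), ⟨hp, hpk, rfl⟩, rfl⟩, by omega⟩
end

section
/- The function m ↦ φ₃(30m) is multiplicative: for all positive integers m and n with gcd(m, n) = 1, φ₃(30mn) = φ₃(30m)·φ₃(30n). -/
/-- `phi3 m` is the number of integers `x` with `0 ≤ x ≤ m - 1` such that
`gcd (m, 30x + i) = 1` for all `i ∈ S`; in the paper's notation this is `φ₃(30m)`. -/
def phi3 (m : ℕ) : ℕ :=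
  ((Finset.range m).filter (fun x => ∀ i ∈ S, Nat.gcd m (30 * x + i) = 1)).card

/-!
Reducing modulo `m` identifies the `x` counted by `φ₃(30m)` with the residues `x ∈ ℤ/m` for
which every `30x + i`, `i ∈ S`, is a unit. For coprime `m, n` the Chinese remainder isomorphism
`ℤ/mn ≅ ℤ/m × ℤ/n` is a ring isomorphism, and an element of a product ring is a unit exactly when
both components are, so it maps these residues bijectively onto the product of the two
corresponding sets.
-/

open Finset

open scoped Classical in
noncomputable def admissibleResidues (R : Type*) [CommRing R] [Fintype R] (a : ℕ)
    (T : Finset ℕ) : Finset R :=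
  univ.filter fun x => ∀ i ∈ T, IsUnit ((a : R) * x + i)

section

variable {R R₁ R₂ : Type*} [CommRing R] [CommRing R₁] [CommRing R₂]
  [Fintype R] [Fintype R₁] [Fintype R₂]

theorem mem_admissibleResidues {a : ℕ} {T : Finset ℕ} {x : R} :
    x ∈ admissibleResidues R a T ↔ ∀ i ∈ T, IsUnit ((a : R) * x + i) := by
  simp [admissibleResidues]

theorem card_admissibleResidues_of_ringEquiv_prod (e : R ≃+* R₁ × R₂) (a : ℕ) (T : Finset ℕ) :
    #(admissibleResidues R a T) = #(admissibleResidues R₁ a T) * #(admissibleResidues R₂ a T) := by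
  rw [← card_product]
  refine card_equiv e.toEquiv fun x => ?_
  have he : ∀ i : ℕ, IsUnit ((a : R) * x + i) ↔
      IsUnit ((a : R₁) * (e x).1 + i) ∧ IsUnit ((a : R₂) * (e x).2 + i) := fun i => by
    rw [← isUnit_map_iff e, Prod.isUnit_iff]
    simp
  simp only [mem_product, mem_admissibleResidues, RingEquiv.toEquiv_eq_coe, EquivLike.coe_coe,
    he, forall_and]

end

theorem card_filter_range_coprime_eq_card_admissibleResidues (m : ℕ) [NeZero m] (a : ℕ)
    (T : Finset ℕ) :
    #((range m).filter fun x => ∀ i ∈ T, Nat.gcd m (a * x + i) = 1) =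
      #(admissibleResidues (ZMod m) a T) := by
  have hunit : ∀ x : ℕ, (∀ i ∈ T, Nat.gcd m (a * x + i) = 1) ↔
      ∀ i ∈ T, IsUnit ((a : ZMod m) * x + i) := fun x => by
    refine forall₂_congr fun i _ => ?_
    rw [← Nat.coprime_iff_gcd_eq_one, Nat.coprime_comm, ← ZMod.isUnit_iff_coprime]
    push_cast
    rfl
  refine card_nbij' (Nat.cast : ℕ → ZMod m) ZMod.val ?_ ?_ ?_ ?_
  · intro x hx
    simp only [coe_filter, Set.mem_ofPred_eq, mem_range] at hx
    simpa [mem_admissibleResidues] using (hunit x).1 hx.2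
  · intro x hx
    simp only [coe_filter, Set.mem_ofPred_eq, mem_range]
    refine ⟨ZMod.val_lt x, (hunit _).2 ?_⟩
    simpa [mem_admissibleResidues] using hx
  · intro x hx
    simp only [coe_filter, Set.mem_ofPred_eq, mem_range] at hx
    exact ZMod.val_cast_of_lt hx.1
  · intro x _
    exact ZMod.natCast_zmod_val x

theorem phi3_multiplicative (m n : ℕ) (hm : 0 < m) (hn : 0 < n)
    (h : Nat.gcd m n = 1) : phi3 (m * n) = phi3 m * phi3 n := by
  have : NeZero m := ⟨hm.ne'⟩
  have : NeZero n := ⟨hn.ne'⟩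
  have : NeZero (m * n) := ⟨(Nat.mul_pos hm hn).ne'⟩
  simp only [phi3, card_filter_range_coprime_eq_card_admissibleResidues]
  exact card_admissibleResidues_of_ringEquiv_prod (ZMod.chineseRemainder h) 30 S
end

section
/- Let m > 1 have prime factorization m = 2^{k₁}·3^{k₂}·5^{k₃}·11^{k₄}·p₅^{k₅}·…·p_r^{k_r}, where k₁, k₂, k₃ ≥ 0, k₄ ≥ 1, the p_s (s ≥ 5) are distinct primes ≥ 13 (in particular none equals 7), and k_s ≥ 1 for s ≥ 5. Then φ₃(30m) = 2^{k₁}·3^{k₂}·5^{k₃}·(11^{k₄} − 6·11^{k₄−1})·(p₅^{k₅} − 8·p₅^{k₅−1})·…·(p_r^{k_r} − 8·p_r^{k_r−1}). -/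
open Function Finset

theorem Nat.count_mul_of_periodic {P : ℕ → Prop} [DecidablePred P] {a : ℕ} (hP : Periodic P a)
    (c : ℕ) : Nat.count P (c * a) = c * Nat.count P a := by
  induction c with
  | zero => simp
  | succ c ih =>
    have hshift : (fun x => P (c * a + x)) = P := funext fun x => by
      rw [add_comm]; exact (hP.nat_mul c) x
    simp only [add_mul, one_mul, Nat.count_add, ih, hshift]

def IsAdmissible {R : Type*} [CommRing R] (x : R) : Prop := ∀ i ∈ S, IsUnit (30 * x + (i : R))

section IsAdmissible

variable {R R' : Type*} [CommRing R] [CommRing R']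

theorem RingEquiv.isAdmissible_apply_iff (e : R ≃+* R') {x : R} :
    IsAdmissible (e x) ↔ IsAdmissible x := by
  refine forall₂_congr fun i _ => ?_
  rw [← isUnit_map_iff e (30 * x + i)]
  simp [map_ofNat]

theorem Prod.isAdmissible_iff {x : R × R'} :
    IsAdmissible x ↔ IsAdmissible x.1 ∧ IsAdmissible x.2 := by
  simp only [IsAdmissible, Prod.isUnit_iff, ← forall₂_and, Prod.fst_add, Prod.snd_add,
    Prod.fst_mul, Prod.snd_mul, Prod.fst_ofNat, Prod.snd_ofNat, Prod.fst_natCast, Prod.snd_natCast]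

theorem ZMod.isAdmissible_natCast_iff {m x : ℕ} :
    IsAdmissible (x : ZMod m) ↔ ∀ i ∈ S, Nat.gcd m (30 * x + i) = 1 := by
  refine forall₂_congr fun i _ => ?_
  rw [show (30 * x + i : ZMod m) = ((30 * x + i : ℕ) : ZMod m) by push_cast; ring,
    ZMod.isUnit_iff_coprime, Nat.coprime_comm]

end IsAdmissible

theorem phi3_eq_natCard (m : ℕ) [NeZero m] : phi3 m = Nat.card {x : ZMod m // IsAdmissible x} := by
  rw [phi3, ← Nat.card_eq_finsetCard]
  exact Nat.card_congr
    { toFun := fun x => ⟨x.1, ZMod.isAdmissible_natCast_iff.2 (mem_filter.1 x.2).2⟩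
      invFun := fun y => ⟨y.1.val, mem_filter.2 ⟨mem_range.2 (ZMod.val_lt _),
        ZMod.isAdmissible_natCast_iff.1 (by simpa using y.2)⟩⟩
      left_inv := fun x => Subtype.ext (ZMod.val_cast_of_lt (mem_range.1 (mem_filter.1 x.2).1))
      right_inv := fun y => Subtype.ext (ZMod.natCast_zmod_val y.1) }

theorem phi3_zero : phi3 0 = 0 := rfl

theorem phi3_one : phi3 1 = 1 := rfl

theorem phi3_mul_of_coprime {a b : ℕ} (h : Nat.Coprime a b) : phi3 (a * b) = phi3 a * phi3 b := by
  rcases eq_or_ne a 0 with rfl | ha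
  · simp [(Nat.coprime_zero_left b).1 h, phi3_zero]
  rcases eq_or_ne b 0 with rfl | hb
  · simp [(Nat.coprime_zero_right a).1 h, phi3_zero]
  have : NeZero a := ⟨ha⟩
  have : NeZero b := ⟨hb⟩
  have : NeZero (a * b) := ⟨mul_ne_zero ha hb⟩
  let e := ZMod.chineseRemainder h
  rw [phi3_eq_natCard, phi3_eq_natCard, phi3_eq_natCard, ← Nat.card_prod]
  exact Nat.card_congr <| (e.toEquiv.subtypeEquiv fun x => e.isAdmissible_apply_iff.symm).trans <|
    (Equiv.subtypeEquivRight fun x => Prod.isAdmissible_iff).trans Equiv.subtypeProdEquivProd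

def phi3Arith : ArithmeticFunction ℕ := ⟨phi3, phi3_zero⟩

theorem isMultiplicative_phi3Arith : phi3Arith.IsMultiplicative :=
  ⟨phi3_one, phi3_mul_of_coprime⟩

theorem phi3_prod {ι : Type*} (g : ι → ℕ) (s : Finset ι)
    (hs : (s : Set ι).Pairwise (Nat.Coprime on g)) : phi3 (∏ i ∈ s, g i) = ∏ i ∈ s, phi3 (g i) :=
  isMultiplicative_phi3Arith.map_prod g s hs

theorem S_coprime_thirty : ∀ i ∈ S, Nat.Coprime 30 i := by decide

theorem phi3_of_dvd_thirty_pow {n j : ℕ} (h : n ∣ 30 ^ j) : phi3 n = n := by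
  rw [phi3, filter_true_of_mem, card_range]
  intro x _ i hi
  refine Nat.Coprime.coprime_dvd_left h (Nat.Coprime.pow_left j ?_)
  simpa using S_coprime_thirty i hi

theorem phi3_pow (p : ℕ) {k : ℕ} (hk : k ≠ 0) : phi3 (p ^ k) = p ^ (k - 1) * phi3 p := by
  have hper : Periodic (fun x => ∀ i ∈ S, Nat.Coprime p (30 * x + i)) p := fun x => by
    simp only [mul_add, add_right_comm _ (30 * p), Nat.coprime_add_mul_right_right]
  have hpow : ∀ n, Nat.Coprime (p ^ k) n ↔ Nat.Coprime p n :=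
    Nat.coprime_pow_left_iff (Nat.pos_of_ne_zero hk) p
  simp only [phi3, ← Nat.coprime_iff_gcd_eq_one, hpow, ← Nat.count_eq_card_filter_range]
  rw [← Nat.count_mul_of_periodic hper, ← pow_succ, Nat.sub_one_add_one hk]

theorem card_forall_mul_add_ne_zero {F : Type*} [Field F] [Fintype F] [DecidableEq F] {c : F}
    (hc : c ≠ 0) (A : Finset F) :
    Nat.card {x : F // ∀ a ∈ A, c * x + a ≠ 0} = Fintype.card F - #A := by
  have hroot : ∀ a x, c * x + a = 0 ↔ -a / c = x := fun a x => by
    rw [div_eq_iff hc, neg_eq_iff_add_eq_zero, add_comm, mul_comm]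
  have hinj : Injective fun a : F => -a / c := fun a b h => by
    simpa [div_left_inj' hc] using h
  calc Nat.card {x : F // ∀ a ∈ A, c * x + a ≠ 0}
      = Nat.card {x : F // x ∉ A.image fun a => -a / c} := by
        simp only [hroot, mem_image, not_exists, not_and, ne_eq]
    _ = Fintype.card F - #A := by
        rw [Nat.card_eq_fintype_card, Fintype.card_subtype_compl, Fintype.card_coe,
          card_image_of_injective _ hinj]

theorem phi3_prime {p : ℕ} (hp : p.Prime) (h30 : Nat.Coprime p 30) :
    phi3 p = p - #(S.image (Nat.cast : ℕ → ZMod p)) := by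
  have := Fact.mk hp
  have h30' : (30 : ZMod p) ≠ 0 := by
    exact_mod_cast ((ZMod.isUnit_iff_coprime 30 p).2 h30.symm).ne_zero
  calc phi3 p = Nat.card {x : ZMod p // ∀ a ∈ S.image (Nat.cast : ℕ → ZMod p), 30 * x + a ≠ 0} := by
        rw [phi3_eq_natCard]
        exact Nat.card_congr (Equiv.subtypeEquivRight fun x => by
          simp [IsAdmissible, isUnit_iff_ne_zero])
    _ = p - #(S.image (Nat.cast : ℕ → ZMod p)) := by
        rw [card_forall_mul_add_ne_zero h30', ZMod.card]

-- Differences of elements of `S` are even and at most `28`, and none of them is `26`.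
theorem injOn_natCast_S {q : ℕ} (hq : Odd q) (h13 : 13 ≤ q) :
    Set.InjOn (Nat.cast : ℕ → ZMod q) S := by
  intro i hi j hj hij
  rw [ZMod.natCast_eq_natCast_iff'] at hij
  have hS : ∀ i ∈ S, i < 30 := by decide
  rcases le_or_gt 30 q with h30 | h30
  · rwa [Nat.mod_eq_of_lt ((hS i hi).trans_le h30),
      Nat.mod_eq_of_lt ((hS j hj).trans_le h30)] at hij
  · rw [Nat.odd_iff] at hq
    revert i j
    interval_cases q <;> first | decide | exact absurd hq (by norm_num)

theorem Nat.Prime.coprime_thirty {p : ℕ} (hp : p.Prime) (h7 : 7 ≤ p) : Nat.Coprime p 30 :=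
  have h : ∀ q, q.Prime → q < 7 → Nat.Coprime p q := fun q hq hlt =>
    (Nat.coprime_primes hp hq).2 (by omega)
  (((h 2 Nat.prime_two (by norm_num)).mul_right (h 3 Nat.prime_three (by norm_num))).mul_right
    (h 5 Nat.prime_five (by norm_num)) :)

-- `S` reduces mod `11` to `{0, 1, 2, 6, 7, 8}`.
theorem phi3_eleven : phi3 11 = 11 - 6 := by
  rw [phi3_prime (by norm_num) (by norm_num)]
  rfl

theorem phi3_prime_of_thirteen_le {p : ℕ} (hp : p.Prime) (h13 : 13 ≤ p) : phi3 p = p - 8 := by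
  rw [phi3_prime hp (hp.coprime_thirty (by omega)),
    card_image_of_injOn (injOn_natCast_S (hp.odd_of_ne_two (by omega)) h13)]
  rfl

theorem phi3_pow_of_eq_sub {q c e : ℕ} (he : e ≠ 0) (hq : phi3 q = q - c) :
    phi3 (q ^ e) = q ^ e - c * q ^ (e - 1) := by
  rw [phi3_pow q he, hq, Nat.mul_sub, ← pow_succ, Nat.sub_one_add_one he, mul_comm]

theorem phi3_formula_general (m : ℕ)
    (k₁ k₂ k₃ k₄ : ℕ) (hk₄ : 1 ≤ k₄)
    (r : ℕ) (p k : ℕ → ℕ)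
    (hp : ∀ s ∈ Finset.Icc 5 r, (p s).Prime ∧ 13 ≤ p s)
    (hk : ∀ s ∈ Finset.Icc 5 r, 1 ≤ k s)
    (hdist : ∀ s ∈ Finset.Icc 5 r, ∀ t ∈ Finset.Icc 5 r, p s = p t → s = t)
    (hfact : m = 2 ^ k₁ * 3 ^ k₂ * 5 ^ k₃ * 11 ^ k₄ *
      ∏ s ∈ Finset.Icc 5 r, p s ^ k s) :
    phi3 m = 2 ^ k₁ * 3 ^ k₂ * 5 ^ k₃ * (11 ^ k₄ - 6 * 11 ^ (k₄ - 1)) *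
      ∏ s ∈ Finset.Icc 5 r, (p s ^ k s - 8 * p s ^ (k s - 1)) := by
  subst hfact
  have hN : 2 ^ k₁ * 3 ^ k₂ * 5 ^ k₃ ∣ 30 ^ (k₁ + k₂ + k₃) := by
    rw [pow_add, pow_add]
    exact mul_dvd_mul (mul_dvd_mul (pow_dvd_pow_of_dvd (by norm_num) _)
      (pow_dvd_pow_of_dvd (by norm_num) _)) (pow_dvd_pow_of_dvd (by norm_num) _)
  have hN11 : Nat.Coprime (2 ^ k₁ * 3 ^ k₂ * 5 ^ k₃) (11 ^ k₄) :=
    Nat.Coprime.coprime_dvd_left hN (Nat.Coprime.pow _ _ (by norm_num))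
  have hQ : Nat.Coprime (2 ^ k₁ * 3 ^ k₂ * 5 ^ k₃ * 11 ^ k₄) (∏ s ∈ Icc 5 r, p s ^ k s) := by
    refine Nat.Coprime.prod_right fun s hs => Nat.Coprime.pow_right _ (Nat.Coprime.symm ?_)
    obtain ⟨hps, h13⟩ := hp s hs
    exact Nat.Coprime.mul_right
      (((hps.coprime_thirty (by omega)).pow_right _).coprime_dvd_right hN)
      (((Nat.coprime_primes hps (by norm_num)).2 (by omega)).pow_right _)
  have hpair : (Icc 5 r : Set ℕ).Pairwise (Nat.Coprime on fun s => p s ^ k s) :=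
    fun s hs t ht hst => Nat.Coprime.pow _ _
      ((Nat.coprime_primes (hp s hs).1 (hp t ht).1).2 fun h => hst (hdist s hs t ht h))
  rw [phi3_mul_of_coprime hQ, phi3_mul_of_coprime hN11, phi3_of_dvd_thirty_pow hN,
    phi3_pow_of_eq_sub (by omega) phi3_eleven, phi3_prod _ _ hpair]
  congr 1
  exact prod_congr rfl fun s hs => phi3_pow_of_eq_sub (Nat.one_le_iff_ne_zero.1 (hk s hs))
    (phi3_prime_of_thirteen_le (hp s hs).1 (hp s hs).2)

theorem phi3_formula (m : ℕ) (hm : 1 < m)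
    (k₁ k₂ k₃ k₄ : ℕ) (hk₄ : 1 ≤ k₄)
    (r : ℕ) (p k : ℕ → ℕ)
    (hp : ∀ s ∈ Finset.Icc 5 r, (p s).Prime ∧ 13 ≤ p s)
    (hk : ∀ s ∈ Finset.Icc 5 r, 1 ≤ k s)
    (hdist : ∀ s ∈ Finset.Icc 5 r, ∀ t ∈ Finset.Icc 5 r, p s = p t → s = t)
    (hfact : m = 2 ^ k₁ * 3 ^ k₂ * 5 ^ k₃ * 11 ^ k₄ *
      ∏ s ∈ Finset.Icc 5 r, p s ^ k s) :
    phi3 m = 2 ^ k₁ * 3 ^ k₂ * 5 ^ k₃ * (11 ^ k₄ - 6 * 11 ^ (k₄ - 1)) *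
      ∏ s ∈ Finset.Icc 5 r, (p s ^ k s - 8 * p s ^ (k s - 1)) :=
  phi3_formula_general m k₁ k₂ k₃ k₄ hk₄ r p k hp hk hdist hfact
end

section
/- For every integer a > 1 there exists an integer n₀ such that for all integers n ≥ n₀: a·(7/6)·(11/5)·∏_{j=6}^{n+3} p_j/(p_j − 8) < n + 1. -/
/-- `p n` is the n-th prime, with `p 1 = 2`, `p 2 = 3`, etc. -/
noncomputable def p (n : ℕ) : ℕ := Nat.nth Nat.Prime (n - 1)

/-!
Chebyshev's bound `π(x) = O(x / log x)` gives `p (j + 1) ≥ 32 j` for large `j`, and then the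
factor `f j = p j / (p j - 8)` satisfies `f (j + 1) ^ 2 ≤ (j + 1) / j`. These bounds telescope,
so the product up to `n` is `O(√n)` and any constant multiple of it is eventually below `n + 1`.
-/

open Filter Finset

theorem Nat.eventually_mul_primeCounting_le (c : ℕ) :
    ∀ᶠ n : ℕ in atTop, c * n.primeCounting ≤ n := by
  have hlog : ∀ᶠ x : ℝ in atTop, c * (Real.log 4 + 1) ≤ Real.log x :=
    Real.tendsto_log_atTop.eventually_ge_atTop _
  filter_upwards [tendsto_natCast_atTop_atTop.eventually
    ((Chebyshev.eventually_primeCounting_le one_pos).and (hlog.and (eventually_gt_atTop 1)))]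
    with n ⟨hπ, hc, hn⟩
  rw [Nat.floor_natCast] at hπ
  have hlogn : 0 < Real.log n := Real.log_pos hn
  have : (c : ℝ) * n.primeCounting ≤ n := calc
    (c : ℝ) * n.primeCounting ≤ c * ((Real.log 4 + 1) * n / Real.log n) := by gcongr
    _ = c * (Real.log 4 + 1) / Real.log n * n := by ring
    _ ≤ n := mul_le_of_le_one_left (by positivity) ((div_le_one hlogn).mpr hc)
  exact_mod_cast this

theorem Nat.eventually_mul_le_nth_prime (c : ℕ) :
    ∀ᶠ j : ℕ in atTop, c * j ≤ nth Prime j := by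
  filter_upwards [(nth_strictMono infinite_setOfPred_prime).tendsto_atTop.eventually
    (eventually_mul_primeCounting_le c)] with j hj
  calc c * j = c * primeCounting' (nth Prime j) := by rw [primeCounting'_nth_eq]
    _ ≤ c * primeCounting (nth Prime j) :=
      Nat.mul_le_mul_left c (monotone_primeCounting' (le_succ _))
    _ ≤ nth Prime j := hj

theorem div_sub_sq_mul_le {a x y : ℝ} (ha : 0 < a) (hy : 0 ≤ y) (hx : 2 * a * (y + 1) ≤ x) :
    (x / (x - a)) ^ 2 * y ≤ y + 1 := by
  have hxa : 0 < x - a := by nlinarith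
  rw [div_pow, div_mul_eq_mul_div, div_le_iff₀ (by positivity)]
  -- `(y + 1) (x - a)² - x² y = x (x - 2a(y + 1)) + a² (y + 1)`
  nlinarith [mul_nonneg (by linarith : 0 ≤ x) (sub_nonneg.mpr hx)]

theorem sq_prod_Ioc_mul_le {g : ℕ → ℝ} {K : ℕ}
    (hg : ∀ j, K ≤ j → g (j + 1) ^ 2 * j ≤ j + 1) {m : ℕ} (hm : K ≤ m) :
    (∏ j ∈ Ioc K m, g j) ^ 2 * K ≤ m := by
  induction m, hm using Nat.le_induction with
  | base => simp
  | succ m hKm ih =>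
    calc (∏ j ∈ Ioc K (m + 1), g j) ^ 2 * K
        = (∏ j ∈ Ioc K m, g j) ^ 2 * K * g (m + 1) ^ 2 := by rw [prod_Ioc_succ_top hKm]; ring
      _ ≤ m * g (m + 1) ^ 2 := by gcongr
      _ ≤ (m + 1 : ℕ) := by push_cast; linarith [hg m hKm]

theorem exists_sq_prod_div_sub_eight_le :
    ∃ B : ℝ, ∀ᶠ n : ℕ in atTop,
      (∏ j ∈ Icc 6 n, (p j : ℝ) / ((p j : ℝ) - 8)) ^ 2 ≤ B * n := by
  set f : ℕ → ℝ := fun j => (p j : ℝ) / ((p j : ℝ) - 8)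
  obtain ⟨K, hK⟩ :=
    ((Nat.eventually_mul_le_nth_prime 32).and (eventually_ge_atTop 5)).exists_forall_of_atTop
  have hK5 : 5 ≤ K := (hK K le_rfl).2
  have hf : ∀ j, K ≤ j → f (j + 1) ^ 2 * j ≤ j + 1 := fun j hj => by
    have hprime : (32 : ℝ) * j ≤ Nat.nth Nat.Prime j := by exact_mod_cast (hK j hj).1
    have hj5 : (5 : ℝ) ≤ j := by exact_mod_cast hK5.trans hj
    refine div_sub_sq_mul_le (by norm_num) (by linarith) ?_
    simp only [p, Nat.add_sub_cancel]
    linarith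
  refine ⟨(∏ j ∈ Ioc 5 K, f j) ^ 2 / K, ?_⟩
  filter_upwards [eventually_ge_atTop K] with n hn
  have hKpos : (0 : ℝ) < K := by exact_mod_cast (by omega : 0 < K)
  have hsplit := prod_Ioc_consecutive f hK5 hn
  have hQ := sq_prod_Ioc_mul_le hf hn
  rw [show Icc 6 n = Ioc 5 n from Icc_add_one_left_eq_Ioc 5 n, ← hsplit, mul_pow,
    div_mul_eq_mul_div, le_div_iff₀ hKpos, mul_assoc]
  gcongr

theorem density_dominated_general (a : ℤ) :
    ∃ n₀ : ℤ, ∀ n : ℕ, (n₀ : ℤ) ≤ n →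
      (a : ℝ) * (7 / 6) * (11 / 5) *
          ∏ j ∈ Finset.Icc 6 (n + 3), (p j : ℝ) / ((p j : ℝ) - 8) <
        (n : ℝ) + 1 := by
  obtain ⟨B, hB⟩ := exists_sq_prod_div_sub_eight_le
  set C : ℝ := (a : ℝ) * (7 / 6) * (11 / 5)
  have h : ∀ᶠ n : ℕ in atTop,
      C * ∏ j ∈ Icc 6 (n + 3), (p j : ℝ) / ((p j : ℝ) - 8) < n + 1 := by
    filter_upwards [(tendsto_add_atTop_nat 3).eventually hB,
      tendsto_natCast_atTop_atTop.eventually_gt_atTop (3 * C ^ 2 * B)] with n hP hn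
    set P := ∏ j ∈ Icc 6 (n + 3), (p j : ℝ) / ((p j : ℝ) - 8)
    push_cast at hP
    have hB0 : 0 ≤ B := nonneg_of_mul_nonneg_left ((sq_nonneg P).trans hP) (by positivity)
    refine (abs_lt_of_sq_lt_sq' ?_ (by positivity)).2
    calc (C * P) ^ 2 = C ^ 2 * P ^ 2 := by ring
      _ ≤ C ^ 2 * (B * (n + 3)) := by gcongr
      _ ≤ 3 * C ^ 2 * B * (n + 1) := by nlinarith [mul_nonneg (sq_nonneg C) hB0]
      _ < (n + 1) ^ 2 := by nlinarith
  obtain ⟨N, hN⟩ := h.exists_forall_of_atTop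
  exact ⟨N, fun n hn => hN n (by exact_mod_cast hn)⟩

theorem density_dominated (a : ℤ) (ha : 1 < a) :
    ∃ n₀ : ℤ, ∀ n : ℕ, (n₀ : ℤ) ≤ n →
      (a : ℝ) * (7 / 6) * (11 / 5) *
          ∏ j ∈ Finset.Icc 6 (n + 3), (p j : ℝ) / ((p j : ℝ) - 8) <
        (n : ℝ) + 1 :=
  density_dominated_general a
end

section
/- The sequence (1/(n+1))·(7/6)·(11/5)·∏_{j=6}^{n+3} p_j/(p_j − 8) tends to 0 as n → ∞. -/
/-!
Chebyshev's bound `π(x) = O(x / log x)` makes `p_j / j` tend to infinity, so eventually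
`p_j ≥ 32 j`, and then `(p_j / (p_j - 8))² ≤ (j + 1) / j`. The squared factors therefore telescope
to a product of size `O(n)`, so the product itself is `O(√n) = o(n)`.
-/

open Filter

open Finset Real
open scoped Topology

theorem Nat.primeCounting_nth_eq (n : ℕ) : (nth Nat.Prime n).primeCounting = n + 1 := by
  rw [primeCounting, primeCounting', count_succ, ← primeCounting', primeCounting'_nth_eq,
    if_pos (prime_nth_prime n)]

/-- Chebyshev's bound `π(x) ≤ C x / log x`, read at `x = p_n` where `π(x) = n + 1`. -/
theorem Nat.tendsto_nth_prime_div_succ_atTop :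
    Tendsto (fun n : ℕ => (nth Nat.Prime n : ℝ) / (n + 1)) atTop atTop := by
  have hp : Tendsto (fun n : ℕ => (nth Nat.Prime n : ℝ)) atTop atTop :=
    tendsto_natCast_atTop_atTop.comp (nth_strictMono infinite_setOfPred_prime).tendsto_atTop
  have hc : (0 : ℝ) < Real.log 4 + 1 := by positivity
  refine tendsto_atTop_mono' _ ?_ ((tendsto_log_atTop.comp hp).atTop_div_const hc)
  filter_upwards [hp.eventually (Chebyshev.eventually_primeCounting_le one_pos),
    hp.eventually (eventually_gt_atTop 1)] with n hπ hp1
  simp only [Function.comp_apply, floor_natCast, primeCounting_nth_eq, cast_add,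
    cast_one] at hπ ⊢
  rw [le_div_iff₀ (Real.log_pos hp1)] at hπ
  rw [div_le_div_iff₀ hc (by positivity)]
  linarith

theorem tendsto_p_div_atTop : Tendsto (fun j : ℕ => (p j : ℝ) / j) atTop atTop := by
  refine (Nat.tendsto_nth_prime_div_succ_atTop.comp (tendsto_sub_atTop_nat 1)).congr' ?_
  filter_upwards [eventually_ge_atTop 1] with j hj
  simp [p, Nat.cast_sub hj]

theorem sq_div_sub_le_add_one_div {c x y : ℝ} (hc : 0 < c) (hy : 1 ≤ y)
    (hx : 3 * c * y + c ≤ x) : (x / (x - c)) ^ 2 ≤ (y + 1) / y := by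
  have hxc : 0 < x - c := by nlinarith
  rw [div_pow, div_le_div_iff₀ (by positivity) (by positivity)]
  have h1 : 0 ≤ x - c - 3 * c * y := by linarith
  have h2 : 0 ≤ x - c - 2 * c * y := by nlinarith
  nlinarith [mul_nonneg h1 h2, mul_nonneg (mul_nonneg hc.le hc.le) (by linarith : 0 ≤ y - 1)]

theorem eventually_sq_p_div_p_sub_eight_le :
    ∀ᶠ j : ℕ in atTop, ((p j : ℝ) / ((p j : ℝ) - 8)) ^ 2 ≤ ((j : ℝ) + 1) / j := by
  filter_upwards [tendsto_p_div_atTop.eventually_ge_atTop 32, eventually_ge_atTop 1]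
    with j hp hj
  have hj' : (1 : ℝ) ≤ j := by exact_mod_cast hj
  rw [le_div_iff₀ (by positivity)] at hp
  exact sq_div_sub_le_add_one_div (by norm_num) hj' (by linarith)

theorem Finset.prod_Ico_add_one_div_self {N M : ℕ} (hN : 0 < N) (hNM : N ≤ M) :
    ∏ j ∈ Ico N M, ((j : ℝ) + 1) / j = M / N := by
  induction M, hNM using Nat.le_induction with
  | base => simp [hN.ne']
  | succ M hNM ih =>
    have hM : (M : ℝ) ≠ 0 := by exact_mod_cast (hN.trans_le hNM).ne'
    rw [prod_Ico_succ_top hNM, ih]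
    push_cast
    field_simp

theorem Finset.abs_prod_Ico_le_sqrt_div {f : ℕ → ℝ} {N M : ℕ} (hN : 0 < N) (hNM : N ≤ M)
    (hf : ∀ j ∈ Ico N M, f j ^ 2 ≤ ((j : ℝ) + 1) / j) :
    |∏ j ∈ Ico N M, f j| ≤ √(M / N) := by
  apply abs_le_sqrt
  rw [← prod_pow, ← prod_Ico_add_one_div_self hN hNM]
  exact prod_le_prod (fun j _ => sq_nonneg _) hf

theorem tendsto_prod_Ico_div_atTop_nhds_zero {f : ℕ → ℝ}
    (hf : ∀ᶠ j in atTop, f j ^ 2 ≤ ((j : ℝ) + 1) / j) (m : ℕ) :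
    Tendsto (fun n : ℕ => (∏ j ∈ Ico m n, f j) / n) atTop (𝓝 0) := by
  obtain ⟨N, hN⟩ := eventually_atTop.mp hf
  set K := N + m + 1
  set D := ∏ j ∈ Ico m K, f j
  have hbound : ∀ n ≥ K, ‖(∏ j ∈ Ico m n, f j) / n‖ ≤ |D| / √K * (√n)⁻¹ := by
    intro n hn
    have hn0 : (0 : ℝ) < n := by exact_mod_cast (show 0 < n by omega)
    have htail : |∏ j ∈ Ico K n, f j| ≤ √n / √K := by
      rw [← sqrt_div' _ (Nat.cast_nonneg K)]
      exact abs_prod_Ico_le_sqrt_div (by omega) hn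
        fun j hj => hN j (by have := (mem_Ico.mp hj).1; omega)
    calc ‖(∏ j ∈ Ico m n, f j) / n‖ = |D| * |∏ j ∈ Ico K n, f j| / n := by
          rw [← prod_Ico_consecutive f (show m ≤ K by omega) hn, norm_div, norm_mul,
            Real.norm_eq_abs, Real.norm_eq_abs, Real.norm_of_nonneg hn0.le]
      _ ≤ |D| * (√n / √K) / n := by gcongr
      _ = |D| / √K * (√n / n) := by ring
      _ = |D| / √K * (√n)⁻¹ := by rw [sqrt_div_self', one_div]
  refine squeeze_zero_norm' (eventually_atTop.mpr ⟨K, hbound⟩) ?_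
  simpa using (tendsto_inv_atTop_zero.comp
    (tendsto_sqrt_atTop.comp tendsto_natCast_atTop_atTop)).const_mul (|D| / √K)

theorem density_ratio_tendsto_zero :
    Tendsto (fun n : ℕ =>
        (1 / ((n : ℝ) + 1)) * (7 / 6) * (11 / 5) *
          ∏ j ∈ Finset.Icc 6 (n + 3), (p j : ℝ) / ((p j : ℝ) - 8))
      atTop (nhds 0) := by
  have hprod := (tendsto_prod_Ico_div_atTop_nhds_zero eventually_sq_p_div_p_sub_eight_le 6).comp
    (tendsto_add_atTop_nat 4)
  have hratio : Tendsto (fun n : ℕ => 1 + 3 * (1 / ((n : ℝ) + 1))) atTop (𝓝 1) := by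
    simpa using (tendsto_one_div_add_atTop_nhds_zero_nat.const_mul (3 : ℝ)).const_add (1 : ℝ)
  convert (hprod.mul hratio).const_mul (77 / 30) using 1
  · ext n
    rw [Function.comp_apply, show Icc 6 (n + 3) = Ico 6 (n + 4) from
      (Ico_add_one_right_eq_Icc 6 (n + 3)).symm]
    push_cast
    field_simp
    ring
  · simp
end

section
/- The sequence (n+1)·(6/7)·(5/11)·∏_{j=6}^{n+3} (p_j − 8)/p_j tends to infinity as n → ∞. -/
open Filter

/-!
Chebyshev's bound `π x = O(x / log x)` gives `j = π (p j) = o(p j)`, so eventually `p j ≥ 16 j`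
and the factor `1 - 8 / p j` is at least `1 - 1 / (2 j)`, whose square is at least `1 - 1 / j`.
These lower bounds telescope: the square of the product up to `m` is `≫ 1 / m`, so the sequence,
of size `n` times that product, grows at least like `√n`.
-/

open Finset Real Asymptotics
open scoped Nat.Prime

theorem Nat.primeCounting_isLittleO :
    (fun n : ℕ ↦ (π n : ℝ)) =o[atTop] (fun n ↦ (n : ℝ)) := by
  have hbigO :
      (fun n : ℕ ↦ (π n : ℝ)) =O[atTop] (fun n : ℕ ↦ (n : ℝ) * (Real.log n)⁻¹) := by
    refine IsBigO.of_bound (Real.log 4 + 1) ?_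
    filter_upwards [tendsto_natCast_atTop_atTop.eventually
      (Chebyshev.eventually_primeCounting_le one_pos)] with n hn
    rw [Nat.floor_natCast] at hn
    rw [Real.norm_natCast, Real.norm_of_nonneg (by positivity)]
    simpa [div_eq_mul_inv, mul_assoc] using hn
  refine hbigO.trans_isLittleO ?_
  simpa using (isBigO_refl (fun n : ℕ ↦ (n : ℝ)) atTop).mul_isLittleO
    (inv_log_isLittleO_one.comp_tendsto tendsto_natCast_atTop_atTop)

theorem tendsto_p_atTop : Tendsto p atTop atTop :=
  (Nat.nth_strictMono Nat.infinite_setOfPred_prime).tendsto_atTop.comp (tendsto_sub_atTop_nat 1)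

theorem primeCounting_p {j : ℕ} (hj : 1 ≤ j) : π (p j) = j := by
  rw [p, Nat.primeCounting_eq_primeCounting'_succ, Nat.primeCounting', Nat.count_succ,
    ← Nat.primeCounting', Nat.primeCounting'_nth_eq, if_pos (Nat.prime_nth_prime _)]
  omega

theorem isLittleO_p : (fun j : ℕ ↦ (j : ℝ)) =o[atTop] (fun j ↦ (p j : ℝ)) :=
  (Nat.primeCounting_isLittleO.comp_tendsto tendsto_p_atTop).congr'
    (eventually_atTop.2 ⟨1, fun _ hj ↦ by simp [primeCounting_p hj]⟩) EventuallyEq.rfl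

theorem p_six : p 6 = 13 := by
  have hcount : Nat.count Nat.Prime 13 = 5 := by decide
  rw [p, show 6 - 1 = 5 from rfl, ← hcount]
  exact Nat.nth_count (by norm_num)

theorem thirteen_le_p {j : ℕ} (hj : 6 ≤ j) : 13 ≤ p j :=
  p_six ▸ (Nat.nth_monotone Nat.infinite_setOfPred_prime) (by omega)

theorem prod_Ioc_one_sub_inv {J m : ℕ} (hJ : 1 ≤ J) (hJm : J ≤ m) :
    ∏ j ∈ Ioc J m, (1 - 1 / (j : ℝ)) = J / m := by
  induction m, hJm using Nat.le_induction with
  | base => simp [div_self (show (J : ℝ) ≠ 0 by positivity)]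
  | succ m hJm ih =>
    have hm : (0 : ℝ) < m := by exact_mod_cast hJ.trans hJm
    rw [prod_Ioc_succ_top hJm, ih]
    push_cast
    field_simp
    ring

theorem one_sub_inv_le_sq_of_one_sub_inv_two_mul_le {x y : ℝ} (hx : 1 ≤ x)
    (hy : 1 - 1 / (2 * x) ≤ y) : 1 - 1 / x ≤ y ^ 2 := by
  have hhalf : 0 ≤ 1 - 1 / (2 * x) := by
    rw [sub_nonneg, div_le_one (by positivity)]; linarith
  calc 1 - 1 / x ≤ (1 - 1 / (2 * x)) ^ 2 := by field_simp; nlinarith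
    _ ≤ y ^ 2 := pow_le_pow_left₀ hhalf hy 2

theorem exists_pos_le_mul_sq_prod_Ioc {f : ℕ → ℝ} {a : ℕ} (hpos : ∀ j, a < j → 0 < f j)
    (hf : ∀ᶠ j in atTop, 1 - 1 / (2 * j) ≤ f j) :
    ∃ c > 0, ∀ᶠ m in atTop, c ≤ m * (∏ j ∈ Ioc a m, f j) ^ 2 := by
  obtain ⟨J₀, hJ₀⟩ := eventually_atTop.1 hf
  set J := max J₀ (a + 1)
  have hJ : 1 ≤ J := (Nat.le_add_left 1 a).trans (le_max_right _ _)
  have hC : 0 < ∏ j ∈ Ioc a J, f j := prod_pos fun j hj ↦ hpos j (mem_Ioc.1 hj).1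
  refine ⟨(∏ j ∈ Ioc a J, f j) ^ 2 * J, by positivity,
    eventually_atTop.2 ⟨J, fun m hm ↦ ?_⟩⟩
  have hone_le : ∀ j ∈ Ioc J m, (1 : ℝ) ≤ j := fun j hj ↦ by
    exact_mod_cast hJ.trans (mem_Ioc.1 hj).1.le
  have hsq : ∀ j ∈ Ioc J m, 1 - 1 / (j : ℝ) ≤ f j ^ 2 := fun j hj ↦
    one_sub_inv_le_sq_of_one_sub_inv_two_mul_le (hone_le j hj)
      (hJ₀ j ((le_max_left _ _).trans (mem_Ioc.1 hj).1.le))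
  have hnonneg : ∀ j ∈ Ioc J m, 0 ≤ 1 - 1 / (j : ℝ) := fun j hj ↦
    sub_nonneg.2 <| div_le_one_of_le₀ (hone_le j hj) j.cast_nonneg
  have hmpos : (0 : ℝ) < m := by exact_mod_cast (by omega : 0 < m)
  calc (∏ j ∈ Ioc a J, f j) ^ 2 * J
      = m * ((∏ j ∈ Ioc a J, f j) ^ 2 * ∏ j ∈ Ioc J m, (1 - 1 / (j : ℝ))) := by
        rw [prod_Ioc_one_sub_inv hJ hm]; field_simp
    _ ≤ m * ((∏ j ∈ Ioc a J, f j) ^ 2 * ∏ j ∈ Ioc J m, f j ^ 2) := by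
        gcongr with j hj
        exacts [hnonneg, hsq j hj]
    _ = m * (∏ j ∈ Ioc a m, f j) ^ 2 := by
        rw [prod_pow, ← mul_pow, prod_Ioc_consecutive _ (by omega) hm]

theorem eventually_one_sub_inv_two_mul_le_p_sub_eight_div :
    ∀ᶠ j : ℕ in atTop, 1 - 1 / (2 * j) ≤ ((p j : ℝ) - 8) / p j := by
  filter_upwards [isLittleO_p.bound (by norm_num : (0 : ℝ) < 1 / 16), eventually_ge_atTop 1]
    with j hj hj1
  rw [Real.norm_natCast, Real.norm_natCast] at hj
  have hj0 : (0 : ℝ) < j := by exact_mod_cast hj1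
  have hp : (0 : ℝ) < p j := by linarith
  rw [sub_div, div_self hp.ne']
  gcongr 1 - ?_
  rw [div_le_div_iff₀ hp (by positivity)]
  linarith

theorem reciprocal_density_tendsto_atTop :
    Tendsto (fun n : ℕ =>
        ((n : ℝ) + 1) * (6 / 7) * (5 / 11) *
          ∏ j ∈ Finset.Icc 6 (n + 3), ((p j : ℝ) - 8) / (p j : ℝ))
      atTop atTop := by
  have hpos : ∀ j, 5 < j → (0 : ℝ) < ((p j : ℝ) - 8) / p j := fun j hj ↦ by
    have : (13 : ℝ) ≤ p j := by exact_mod_cast thirteen_le_p hj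
    exact div_pos (by linarith) (by linarith)
  obtain ⟨c, hc, hbound⟩ :=
    exists_pos_le_mul_sq_prod_Ioc hpos eventually_one_sub_inv_two_mul_le_p_sub_eight_div
  set P : ℕ → ℝ := fun m ↦ ∏ j ∈ Ioc 5 m, ((p j : ℝ) - 8) / p j
  have hP : ∀ m, 0 ≤ P m := fun m ↦ prod_nonneg fun j hj ↦ (hpos j (mem_Ioc.1 hj).1).le
  have hsq : Tendsto (fun n : ℕ ↦ (((n : ℝ) + 1) * (6 / 7) * (5 / 11) * P (n + 3)) ^ 2)
      atTop atTop := by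
    refine tendsto_atTop_mono' _ ?_
      (tendsto_natCast_atTop_atTop.const_mul_atTop (by positivity : 0 < (30 / 77) ^ 2 * c / 3))
    filter_upwards [(tendsto_add_atTop_nat 3).eventually hbound] with n hn
    push_cast at hn
    have hn0 : (0 : ℝ) ≤ n := n.cast_nonneg
    -- `n c ≤ n (n + 3) P² ≤ 3 (n + 1)² P²`
    nlinarith [mul_le_mul_of_nonneg_left hn hn0, sq_nonneg (P (n + 3))]
  refine (tendsto_sqrt_atTop.comp hsq).congr fun n ↦ ?_
  rw [Function.comp_apply, sqrt_sq (by have := hP (n + 3); positivity),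
    show Icc 6 (n + 3) = Ioc 5 (n + 3) from Icc_add_one_left_eq_Ioc 5 (n + 3)]
end
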